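/- If χ ∈ Strat([p,Q]^ε_a, e) for the weak spectroscopy energy game G△ and Q is closed under silent steps (Q ↠ Q), then the formula ⟨ε⟩χ distinguishes p from Q. -/
import Mathlib


open Classical

noncomputable section

namespace Spectroscopy

/-! ### Energies and declining energy games -/

/-- Energies: 8-dimensional vectors over `ℕ ∪ {∞}`, ordered componentwise. -/
abbrev Energy : Type := Fin 8 → ℕ∞

/-- The `i`-th unit vector. -/
def unitE (i : Fin 8) : Energy := fun k => if k = i then 1 else 0

/-- The vector with value `v` at position `i` and `0` elsewhere. -/
def onlyAt (i : Fin 8) (v : ℕ∞) : Energy := fun k => if k = i then v else 0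

/-- Components of energy updates: `-1`, `0`, or minimum selection `min_D`.
For the component at position `k`, `minWith D` selects the minimum over the
positions `{k} ∪ D`, so the requirement `k ∈ D` of the paper holds by
construction. -/
inductive UpdComp : Type
  | decr : UpdComp
  | zero : UpdComp
  | minWith (D : Finset (Fin 8)) : UpdComp
deriving DecidableEq

/-- Energy updates. -/
abbrev Update : Type := Fin 8 → UpdComp

/-- Partial application of an update to an energy (`none` when a component
would become negative). -/
def upd (e : Energy) (u : Update) : Option Energy :=
  if ∀ k, u k = UpdComp.decr → e k ≠ 0 then
    some (fun k =>
      match u k with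
      | UpdComp.decr => e k - 1
      | UpdComp.zero => e k
      | UpdComp.minWith D => (insert k D).inf e)
  else none

/-- A declining energy game: positions, a defender predicate (attacker
positions are the non-defender ones), and moves labeled with updates. -/
structure EGame (Pos : Type) where
  defender : Pos → Prop
  move : Pos → Update → Pos → Prop

/-- Attacker winning budgets `Win_a`: at an attacker position some move must
lead to an attacker-won position under the updated energy; at a defender
position every move must (be defined and) lead to an attacker-won position. -/
inductive EGame.Win {Pos : Type} (G : EGame Pos) : Pos → Energy → Prop
  | attack {g : Pos} {u : Update} {g' : Pos} {e e' : Energy} :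
      ¬ G.defender g → G.move g u g' → upd e u = some e' → G.Win g' e' →
      G.Win g e
  | defend {g : Pos} {e : Energy} :
      G.defender g →
      (∀ u g', G.move g u g' → upd e u ≠ none) →
      (∀ u g' e', G.move g u g' → upd e u = some e' → G.Win g' e') →
      G.Win g e

/-! ### Labeled transition systems with silent steps -/

section LTS

variable {Proc Act : Type}

/-- Weak internal steps `↠`: reflexive-transitive closure of `τ`-steps. -/
def Star (Tr : Proc → Act → Proc → Prop) (τ : Act) : Proc → Proc → Prop :=
  Relation.ReflTransGen fun p p' => Tr p τ p'

/-- A process is stable if it has no `τ`-step. -/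
def Stable (Tr : Proc → Act → Proc → Prop) (τ : Act) (p : Proc) : Prop :=
  ∀ p', ¬ Tr p τ p'

/-- Optional step `p →(α) p'`: a real `α`-step, or `α = τ` and `p = p'`. -/
def OptStep (Tr : Proc → Act → Proc → Prop) (τ : Act) (p : Proc) (α : Act) (p' : Proc) : Prop :=
  Tr p α p' ∨ (α = τ ∧ p = p')

/-- Lift of `→a` to sets. -/
def SetStep (Tr : Proc → Act → Proc → Prop) (Q : Set Proc) (a : Act) (Q' : Set Proc) : Prop :=
  Q' = {q' | ∃ q ∈ Q, Tr q a q'}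

/-- Lift of `↠` to sets. -/
def SetStar (Tr : Proc → Act → Proc → Prop) (τ : Act) (Q Q' : Set Proc) : Prop :=
  Q' = {q' | ∃ q ∈ Q, Star Tr τ q q'}

/-- Lift of `→(α)` to sets. -/
def SetOpt (Tr : Proc → Act → Proc → Prop) (τ : Act) (Q : Set Proc) (α : Act)
    (Q' : Set Proc) : Prop :=
  Q' = {q' | ∃ q ∈ Q, OptStep Tr τ q α q'}

end LTS

/-! ### The logic HML_srbb -/

mutual
/-- Formulas `φ` of HML_srbb: `⟨ε⟩χ` or immediate conjunctions `⋀Ψ`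
(conjunctions are indexed by an arbitrary type). `⊤` is the empty conjunction. -/
inductive Formula (Act : Type) (τ : Act) : Type 1
  | delayed : DFormula Act τ → Formula Act τ
  | conj : (I : Type) → (I → Conjunct Act τ) → Formula Act τ

/-- Delayed formulas `χ`: observations `⟨a⟩φ` (with `a ≠ τ`), standard
conjunctions `⋀Ψ`, stable conjunctions `⋀({¬⟨τ⟩⊤} ∪ Ψ)`, and branching
conjunctions `⋀({(α)φ} ∪ Ψ)`. -/
inductive DFormula (Act : Type) (τ : Act) : Type 1
  | obs : (a : Act) → a ≠ τ → Formula Act τ → DFormula Act τ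
  | conj : (I : Type) → (I → Conjunct Act τ) → DFormula Act τ
  | stableConj : (I : Type) → (I → Conjunct Act τ) → DFormula Act τ
  | branchConj : (α : Act) → Formula Act τ → (I : Type) → (I → Conjunct Act τ) → DFormula Act τ

/-- Conjuncts `ψ`: positive `⟨ε⟩χ` or negative `¬⟨ε⟩χ`. -/
inductive Conjunct (Act : Type) (τ : Act) : Type 1
  | pos : DFormula Act τ → Conjunct Act τ
  | neg : DFormula Act τ → Conjunct Act τ
end

section Semantics

variable {Proc Act : Type}

mutual
/-- Semantics `⟦φ⟧`. -/
def Sat (Tr : Proc → Act → Proc → Prop) (τ : Act) (p : Proc) : Formula Act τ → Prop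
  | .delayed χ => ∃ p', Star Tr τ p p' ∧ SatD Tr τ p' χ
  | .conj _ ps => ∀ i, SatC Tr τ p (ps i)

/-- Semantics `⟦χ⟧^ε` of delayed formulas. -/
def SatD (Tr : Proc → Act → Proc → Prop) (τ : Act) (p : Proc) : DFormula Act τ → Prop
  | .obs a _ φ => ∃ p', Tr p a p' ∧ Sat Tr τ p' φ
  | .conj _ ps => ∀ i, SatC Tr τ p (ps i)
  | .stableConj _ ps => Stable Tr τ p ∧ ∀ i, SatC Tr τ p (ps i)
  | .branchConj α φ _ ps =>
      (∃ p', OptStep Tr τ p α p' ∧ Sat Tr τ p' φ) ∧ ∀ i, SatC Tr τ p (ps i)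

/-- Semantics `⟦ψ⟧^∧` of conjuncts. -/
def SatC (Tr : Proc → Act → Proc → Prop) (τ : Act) (p : Proc) : Conjunct Act τ → Prop
  | .pos χ => ∃ p', Star Tr τ p p' ∧ SatD Tr τ p' χ
  | .neg χ => ¬ ∃ p', Star Tr τ p p' ∧ SatD Tr τ p' χ
end

/-- `φ` distinguishes `p` from the set `Q`. -/
def Distinguishes (Tr : Proc → Act → Proc → Prop) (τ : Act) (φ : Formula Act τ)
    (p : Proc) (Q : Set Proc) : Prop :=
  Sat Tr τ p φ ∧ ∀ q ∈ Q, ¬ Sat Tr τ q φ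

/-- The delayed formula `χ` distinguishes `p` from the set `Q` w.r.t. `⟦·⟧^ε`. -/
def DistinguishesD (Tr : Proc → Act → Proc → Prop) (τ : Act) (χ : DFormula Act τ)
    (p : Proc) (Q : Set Proc) : Prop :=
  SatD Tr τ p χ ∧ ∀ q ∈ Q, ¬ SatD Tr τ q χ

/-- The conjunct `ψ` distinguishes `p` from `q` w.r.t. `⟦·⟧^∧`. -/
def DistinguishesC (Tr : Proc → Act → Proc → Prop) (τ : Act) (ψ : Conjunct Act τ)
    (p q : Proc) : Prop :=
  SatC Tr τ p ψ ∧ ¬ SatC Tr τ q ψ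

/-- Stability-respecting branching bisimulations: symmetric relations with the
branching-bisimulation transfer property and the stability-respecting
property. -/
def IsSRBBisim (Tr : Proc → Act → Proc → Prop) (τ : Act) (R : Proc → Proc → Prop) : Prop :=
  Symmetric R ∧
  (∀ p q, R p q → ∀ α p', Tr p α p' →
    (α = τ ∧ R p' q) ∨
      ∃ q' q'', Star Tr τ q q' ∧ Tr q' α q'' ∧ R p q' ∧ R p' q'') ∧
  (∀ p q, R p q → Stable Tr τ p →
    ∃ q', Star Tr τ q q' ∧ Stable Tr τ q' ∧ R p q')

end Semantics

/-! ### Expressiveness prices -/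

section Expr

variable {Act : Type} {τ : Act}

mutual
/-- Expressiveness price `expr` of formulas. -/
def exprF : Formula Act τ → Energy
  | .delayed χ => exprE χ
  | .conj I ps => ⨆ _ : Nonempty I, ((unitE 4 + unitE 2) + ⨆ i, exprC (ps i))

/-- Expressiveness price `expr^ε` of delayed formulas. -/
def exprE : DFormula Act τ → Energy
  | .obs _ _ φ => unitE 0 + exprF φ
  | .conj I ps => ⨆ _ : Nonempty I, (unitE 2 + ⨆ i, exprC (ps i))
  | .stableConj _ ps => unitE 3 + ⨆ i, exprC (ps i)
  | .branchConj _ φ _ ps =>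
      (unitE 1 + unitE 2) +
        (((unitE 0 + exprF φ) ⊔ onlyAt 5 (1 + exprF φ 0)) ⊔ ⨆ i, exprC (ps i))

/-- Expressiveness price `expr^∧` of conjuncts. -/
def exprC : Conjunct Act τ → Energy
  | .pos χ => exprE χ ⊔ onlyAt 5 (exprE χ 0)
  | .neg χ => (unitE 7 + exprE χ) ⊔ onlyAt 6 (exprE χ 0)
end

end Expr

/-! ### The weak spectroscopy energy game -/

/-- Positions of the weak spectroscopy game. -/
inductive GPos (Proc Act : Type) : Type
  | att (p : Proc) (Q : Set Proc)                                 -- `[p,Q]_a`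
  | attD (p : Proc) (Q : Set Proc)                                -- `[p,Q]^ε_a`
  | attC (p q : Proc)                                             -- `[p,q]^∧_a`
  | attB (p : Proc) (Q : Set Proc)                                -- `[p,Q]^η_a`
  | defC (p : Proc) (Q : Set Proc)                                -- `(p,Q)_d`
  | defS (p : Proc) (Q : Set Proc)                                -- `(p,Q)^s_d`
  | defB (p : Proc) (α : Act) (p' : Proc) (Q Qa : Set Proc)       -- `(p,α,p',Q,Qa)^η_d`

/-- The zero update. -/
def zeroU : Update := fun _ => UpdComp.zero

/-- The update `-ê_i`. -/
def decU (i : Fin 8) : Update := fun k => if k = i then UpdComp.decr else UpdComp.zero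

/-- The update `(min_{1,6},0,0,0,0,0,0,0)`. -/
def minU16 : Update := fun k => if k = 0 then UpdComp.minWith {5} else UpdComp.zero

/-- The update `(min_{1,7},0,0,0,0,0,0,-1)`. -/
def minU17dec8 : Update := fun k =>
  if k = 0 then UpdComp.minWith {6} else if k = 7 then UpdComp.decr else UpdComp.zero

/-- The update `(0,-1,-1,0,0,0,0,0)`. -/
def dec23 : Update := fun k => if k = 1 ∨ k = 2 then UpdComp.decr else UpdComp.zero

/-- The update `(min_{1,6},-1,-1,0,0,0,0,0)`. -/
def minU16dec23 : Update := fun k =>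
  if k = 0 then UpdComp.minWith {5}
  else if k = 1 ∨ k = 2 then UpdComp.decr else UpdComp.zero

section Game

variable {Proc Act : Type}

/-- Moves of the weak spectroscopy game. -/
inductive GMove (Tr : Proc → Act → Proc → Prop) (τ : Act) :
    GPos Proc Act → Update → GPos Proc Act → Prop
  | delay {p : Proc} {Q Q' : Set Proc} :
      SetStar Tr τ Q Q' →
      GMove Tr τ (.att p Q) zeroU (.attD p Q')
  | procrastination {p p' : Proc} {Q : Set Proc} :
      Tr p τ p' → p ≠ p' →
      GMove Tr τ (.attD p Q) zeroU (.attD p' Q)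
  | observation {p p' : Proc} {a : Act} {Q Q' : Set Proc} :
      Tr p a p' → a ≠ τ → SetStep Tr Q a Q' →
      GMove Tr τ (.attD p Q) (decU 0) (.att p' Q')
  | finishing {p : Proc} :
      GMove Tr τ (.att p ∅) zeroU (.defC p ∅)
  | immediateConj {p : Proc} {Q : Set Proc} :
      Q ≠ ∅ →
      GMove Tr τ (.att p Q) (decU 4) (.defC p Q)
  | lateConj {p : Proc} {Q : Set Proc} :
      GMove Tr τ (.attD p Q) zeroU (.defC p Q)
  | conjAnswer {p q : Proc} {Q : Set Proc} :
      q ∈ Q →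
      GMove Tr τ (.defC p Q) (decU 2) (.attC p q)
  | posConjunct {p q : Proc} {Q : Set Proc} :
      SetStar Tr τ {q} Q →
      GMove Tr τ (.attC p q) minU16 (.attD p Q)
  | negConjunct {p q : Proc} {Q : Set Proc} :
      SetStar Tr τ {p} Q → p ≠ q →
      GMove Tr τ (.attC p q) minU17dec8 (.attD q Q)
  | stableConj {p : Proc} {Q : Set Proc} :
      Stable Tr τ p →
      GMove Tr τ (.attD p Q) zeroU (.defS p {q ∈ Q | Stable Tr τ q})
  | conjStableAnswer {p q : Proc} {Q : Set Proc} :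
      q ∈ Q →
      GMove Tr τ (.defS p Q) (decU 3) (.attC p q)
  | stableFinishing {p : Proc} :
      GMove Tr τ (.defS p ∅) (decU 3) (.defC p ∅)
  | branchConj {p p' : Proc} {α : Act} {Q Qa : Set Proc} :
      OptStep Tr τ p α p' → Qa ⊆ Q →
      GMove Tr τ (.attD p Q) zeroU (.defB p α p' (Q \ Qa) Qa)
  | branchAnswer {p p' q : Proc} {α : Act} {Q Qa : Set Proc} :
      q ∈ Q →
      GMove Tr τ (.defB p α p' Q Qa) dec23 (.attC p q)
  | branchObservation {p p' : Proc} {α : Act} {Q Qa Q' : Set Proc} :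
      SetOpt Tr τ Qa α Q' →
      GMove Tr τ (.defB p α p' Q Qa) minU16dec23 (.attB p' Q')
  | branchAccounting {p : Proc} {Q : Set Proc} :
      GMove Tr τ (.attB p Q) (decU 0) (.att p Q)

/-- Defender positions of the weak spectroscopy game. -/
def isDefender : GPos Proc Act → Prop
  | .defC _ _ => True
  | .defS _ _ => True
  | .defB _ _ _ _ _ => True
  | _ => False

/-- The weak spectroscopy energy game `G△`. -/
def specGame (Tr : Proc → Act → Proc → Prop) (τ : Act) : EGame (GPos Proc Act) where
  defender := isDefender
  move := GMove Tr τ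

end Game

/-! ### Strategy formulas -/

section Strat

variable {Proc Act : Type}

mutual
/-- Attacker strategy formulas (formula sort). -/
inductive StratF (Tr : Proc → Act → Proc → Prop) (τ : Act) :
    GPos Proc Act → Energy → Formula Act τ → Prop
  | delay {p : Proc} {Q Q' : Set Proc} {u : Update} {e e' : Energy} {χ : DFormula Act τ} :
      GMove Tr τ (.att p Q) u (.attD p Q') →
      upd e u = some e' →
      (specGame Tr τ).Win (.attD p Q') e' →
      StratD Tr τ (.attD p Q') e' χ →
      StratF Tr τ (.att p Q) e (.delayed χ)
  | immediateConj {p : Proc} {Q : Set Proc} {u : Update} {e e' : Energy}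
      {I : Type} {ps : I → Conjunct Act τ} :
      GMove Tr τ (.att p Q) u (.defC p Q) →
      upd e u = some e' →
      (specGame Tr τ).Win (.defC p Q) e' →
      StratD Tr τ (.defC p Q) e' (.conj I ps) →
      StratF Tr τ (.att p Q) e (.conj I ps)

/-- Attacker strategy formulas (delayed-formula sort). -/
inductive StratD (Tr : Proc → Act → Proc → Prop) (τ : Act) :
    GPos Proc Act → Energy → DFormula Act τ → Prop
  | procrastination {p p' : Proc} {Q : Set Proc} {u : Update} {e e' : Energy}
      {χ : DFormula Act τ} :
      GMove Tr τ (.attD p Q) u (.attD p' Q) →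
      upd e u = some e' →
      (specGame Tr τ).Win (.attD p' Q) e' →
      StratD Tr τ (.attD p' Q) e' χ →
      StratD Tr τ (.attD p Q) e χ
  | observation {p p' : Proc} {a : Act} {Q Q' : Set Proc} {u : Update} {e e' : Energy}
      {φ : Formula Act τ} (ha : a ≠ τ) :
      GMove Tr τ (.attD p Q) u (.att p' Q') →
      Tr p a p' → SetStep Tr Q a Q' →
      upd e u = some e' →
      (specGame Tr τ).Win (.att p' Q') e' →
      StratF Tr τ (.att p' Q') e' φ →
      StratD Tr τ (.attD p Q) e (.obs a ha φ)
  | lateConj {p : Proc} {Q : Set Proc} {u : Update} {e e' : Energy} {χ : DFormula Act τ} :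
      GMove Tr τ (.attD p Q) u (.defC p Q) →
      upd e u = some e' →
      (specGame Tr τ).Win (.defC p Q) e' →
      StratD Tr τ (.defC p Q) e' χ →
      StratD Tr τ (.attD p Q) e χ
  | stable {p : Proc} {Q Q' : Set Proc} {u : Update} {e e' : Energy} {χ : DFormula Act τ} :
      GMove Tr τ (.attD p Q) u (.defS p Q') →
      upd e u = some e' →
      (specGame Tr τ).Win (.defS p Q') e' →
      StratD Tr τ (.defS p Q') e' χ →
      StratD Tr τ (.attD p Q) e χ
  | branch {p p' : Proc} {α : Act} {Q Q' Qa : Set Proc} {u : Update} {e e' : Energy}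
      {χ : DFormula Act τ} :
      GMove Tr τ (.attD p Q) u (.defB p α p' Q' Qa) →
      upd e u = some e' →
      (specGame Tr τ).Win (.defB p α p' Q' Qa) e' →
      StratD Tr τ (.defB p α p' Q' Qa) e' χ →
      StratD Tr τ (.attD p Q) e χ
  | conj {p : Proc} {Q : Set Proc} {e : Energy}
      (us : {q // q ∈ Q} → Update) (es : {q // q ∈ Q} → Energy)
      (ψs : {q // q ∈ Q} → Conjunct Act τ) :
      (∀ qq : {q // q ∈ Q}, GMove Tr τ (.defC p Q) (us qq) (.attC p qq.1)) →
      (∀ qq : {q // q ∈ Q}, upd e (us qq) = some (es qq)) →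
      (∀ qq : {q // q ∈ Q}, (specGame Tr τ).Win (.attC p qq.1) (es qq)) →
      (∀ qq : {q // q ∈ Q}, StratC Tr τ (.attC p qq.1) (es qq) (ψs qq)) →
      StratD Tr τ (.defC p Q) e (.conj {q // q ∈ Q} ψs)
  | stableConj {p : Proc} {Q : Set Proc} {e : Energy}
      (hne : Q.Nonempty)
      (us : {q // q ∈ Q} → Update) (es : {q // q ∈ Q} → Energy)
      (ψs : {q // q ∈ Q} → Conjunct Act τ) :
      (∀ qq : {q // q ∈ Q}, GMove Tr τ (.defS p Q) (us qq) (.attC p qq.1)) →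
      (∀ qq : {q // q ∈ Q}, upd e (us qq) = some (es qq)) →
      (∀ qq : {q // q ∈ Q}, (specGame Tr τ).Win (.attC p qq.1) (es qq)) →
      (∀ qq : {q // q ∈ Q}, StratC Tr τ (.attC p qq.1) (es qq) (ψs qq)) →
      StratD Tr τ (.defS p Q) e (.stableConj {q // q ∈ Q} ψs)
  | stableFinish {p : Proc} {u : Update} {e e' : Energy} :
      GMove Tr τ (.defS p ∅) u (.defC p ∅) →
      upd e u = some e' →
      (specGame Tr τ).Win (.defC p (∅ : Set Proc)) e' →
      StratD Tr τ (.defS p ∅) e (.stableConj Empty fun x => x.elim)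
  | branchConj {p p' : Proc} {α : Act} {Q Qa Q' : Set Proc} {ua ua' : Update}
      {e e1 ea : Energy} {φa : Formula Act τ}
      (us : {q // q ∈ Q} → Update) (es : {q // q ∈ Q} → Energy)
      (ψs : {q // q ∈ Q} → Conjunct Act τ) :
      GMove Tr τ (.defB p α p' Q Qa) ua (.attB p' Q') →
      GMove Tr τ (.attB p' Q') ua' (.att p' Q') →
      upd e ua = some e1 →
      upd e1 ua' = some ea →
      (specGame Tr τ).Win (.att p' Q') ea →
      StratF Tr τ (.att p' Q') ea φa →
      (∀ qq : {q // q ∈ Q}, GMove Tr τ (.defB p α p' Q Qa) (us qq) (.attC p qq.1)) →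
      (∀ qq : {q // q ∈ Q}, upd e (us qq) = some (es qq)) →
      (∀ qq : {q // q ∈ Q}, (specGame Tr τ).Win (.attC p qq.1) (es qq)) →
      (∀ qq : {q // q ∈ Q}, StratC Tr τ (.attC p qq.1) (es qq) (ψs qq)) →
      StratD Tr τ (.defB p α p' Q Qa) e (.branchConj α φa {q // q ∈ Q} ψs)

/-- Attacker strategy formulas (conjunct sort). -/
inductive StratC (Tr : Proc → Act → Proc → Prop) (τ : Act) :
    GPos Proc Act → Energy → Conjunct Act τ → Prop
  | pos {p q : Proc} {Q' : Set Proc} {u : Update} {e e' : Energy} {χ : DFormula Act τ} :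
      GMove Tr τ (.attC p q) u (.attD p Q') →
      upd e u = some e' →
      (specGame Tr τ).Win (.attD p Q') e' →
      StratD Tr τ (.attD p Q') e' χ →
      StratC Tr τ (.attC p q) e (.pos χ)
  | neg {p q : Proc} {P' : Set Proc} {u : Update} {e e' : Energy} {χ : DFormula Act τ} :
      GMove Tr τ (.attC p q) u (.attD q P') →
      upd e u = some e' →
      (specGame Tr τ).Win (.attD q P') e' →
      StratD Tr τ (.attD q P') e' χ →
      StratC Tr τ (.attC p q) e (.neg χ)
end

end Strat


section KeyLemma

variable {Proc Act : Type}

/-- Auxiliary motive (formula sort). -/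
def MotF (Tr : Proc → Act → Proc → Prop) (τ : Act) : GPos Proc Act → Formula Act τ → Prop
  | .att p Q, φ => Sat Tr τ p φ ∧ ∀ q ∈ Q, ¬ Sat Tr τ q φ
  | _, _ => True

/-- Auxiliary motive (delayed-formula sort). -/
def MotD (Tr : Proc → Act → Proc → Prop) (τ : Act) : GPos Proc Act → DFormula Act τ → Prop
  | .attD p Q, χ =>
      (∃ p', Star Tr τ p p' ∧ SatD Tr τ p' χ) ∧ ∀ q ∈ Q, ¬ SatD Tr τ q χ
  | .defC p Q, χ => SatD Tr τ p χ ∧ ∀ q ∈ Q, ¬ SatD Tr τ q χ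
  | .defS p Q, χ =>
      (Stable Tr τ p → SatD Tr τ p χ) ∧ (∀ q, SatD Tr τ q χ → Stable Tr τ q) ∧
        ∀ q ∈ Q, ¬ SatD Tr τ q χ
  | .defB p α p' Q2 Qa, χ =>
      (OptStep Tr τ p α p' → SatD Tr τ p χ) ∧ (∀ q ∈ Q2, ¬ SatD Tr τ q χ) ∧
        ∀ q ∈ Qa, ¬ SatD Tr τ q χ
  | _, _ => True

/-- Auxiliary motive (conjunct sort). -/
def MotC (Tr : Proc → Act → Proc → Prop) (τ : Act) : GPos Proc Act → Conjunct Act τ → Prop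
  | .attC p q, ψ => SatC Tr τ p ψ ∧ ¬ SatC Tr τ q ψ
  | _, _ => True

theorem keyD {Tr : Proc → Act → Proc → Prop} {τ : Act} :
    ∀ {g : GPos Proc Act} {e : Energy} {χ : DFormula Act τ},
      StratD Tr τ g e χ → MotD Tr τ g χ := by
  intro g e χ h
  refine StratD.rec (motive_1 := fun g _ φ _ => MotF Tr τ g φ)
    (motive_2 := fun g _ χ _ => MotD Tr τ g χ)
    (motive_3 := fun g _ ψ _ => MotC Tr τ g ψ)
    ?_ ?_ ?_ ?_ ?_ ?_ ?_ ?_ ?_ ?_ ?_ ?_ ?_ h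
  -- delay
  · intro p Q Q' u e e' χ mv hupd hwin hst ih
    simp only [MotF, MotD] at ih ⊢
    cases mv with
    | delay hQQ' =>
      obtain ⟨⟨p', hp', hs⟩, hneg⟩ := ih
      refine ⟨⟨p', hp', hs⟩, ?_⟩
      rintro q hq ⟨q', hq', hs'⟩
      exact hneg q' (by rw [show SetStar Tr τ Q Q' from hQQ' ]; exact ⟨q, hq, hq'⟩) hs'
  -- immediate conjunction
  · intro p Q u e e' I ps mv hupd hwin hst ih
    simp only [MotF, MotD, Sat, SatD] at ih ⊢
    exact ih
  -- procrastination
  · intro p p' Q u e e' χ mv hupd hwin hst ih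
    simp only [MotD] at ih ⊢
    cases mv with
    | procrastination htr hne =>
      obtain ⟨⟨p'', hp'', hs⟩, hneg⟩ := ih
      exact ⟨⟨p'', Relation.ReflTransGen.head htr hp'', hs⟩, hneg⟩
  -- observation
  · intro p p' a Q Q' u e e' φ ha mv htr hstep hupd hwin hst ih
    simp only [MotF] at ih
    simp only [MotD, SatD]
    obtain ⟨hsp, hneg⟩ := ih
    refine ⟨⟨p, Relation.ReflTransGen.refl, p', htr, hsp⟩, ?_⟩
    rintro q hq ⟨q', hq', hs'⟩
    exact hneg q' (by rw [show SetStep Tr Q a Q' from hstep]; exact ⟨q, hq, hq'⟩) hs'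
  -- late conjunction
  · intro p Q u e e' χ mv hupd hwin hst ih
    simp only [MotD] at ih ⊢
    exact ⟨⟨p, Relation.ReflTransGen.refl, ih.1⟩, ih.2⟩
  -- stable
  · intro p Q Q' u e e' χ mv hupd hwin hst ih
    simp only [MotD] at ih ⊢
    cases mv with
    | stableConj hstab =>
      refine ⟨⟨p, Relation.ReflTransGen.refl, ih.1 hstab⟩, ?_⟩
      intro q hq hs
      exact ih.2.2 q ⟨hq, ih.2.1 q hs⟩ hs
  -- branch
  · intro p p' α Q Q' Qa u e e' χ mv hupd hwin hst ih
    simp only [MotD] at ih ⊢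
    cases mv with
    | branchConj hopt hsub =>
      refine ⟨⟨p, Relation.ReflTransGen.refl, ih.1 hopt⟩, ?_⟩
      intro q hq hs
      by_cases hqa : q ∈ Qa
      · exact ih.2.2 q hqa hs
      · exact ih.2.1 q ⟨hq, hqa⟩ hs
  -- conj
  · intro p Q e us es ψs hmv hupd hwin hst ih
    simp only [MotD, MotC, SatD] at ih ⊢
    refine ⟨fun qq => (ih qq).1, ?_⟩
    intro q hq hs
    exact (ih ⟨q, hq⟩).2 (hs ⟨q, hq⟩)
  -- stable conj
  · intro p Q e hne us es ψs hmv hupd hwin hst ih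
    simp only [MotD, MotC, SatD] at ih ⊢
    refine ⟨fun hp => ⟨hp, fun qq => (ih qq).1⟩, fun q hs => hs.1, ?_⟩
    intro q hq hs
    exact (ih ⟨q, hq⟩).2 (hs.2 ⟨q, hq⟩)
  -- stable finishing
  · intro p u e e' mv hupd hwin
    simp only [MotD, SatD]
    exact ⟨fun hp => ⟨hp, fun i => i.elim⟩, fun q hs => hs.1, fun q hq => hq.elim⟩
  -- branch conj
  · intro p p' α Q Qa Q' ua ua' e e1 ea φa us es ψs mva mva' hupd1 hupd2 hwin hstf
      hmv hupd hwinc hstc ihF ihC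
    simp only [MotF] at ihF
    simp only [MotD, MotC, SatD] at ihC ⊢
    cases mva with
    | branchObservation hQ' =>
      refine ⟨fun hopt => ⟨⟨p', hopt, ihF.1⟩, fun qq => (ihC qq).1⟩, ?_, ?_⟩
      · intro q hq hs
        exact (ihC ⟨q, hq⟩).2 (hs.2 ⟨q, hq⟩)
      · rintro q hq ⟨⟨q', hq', hs'⟩, _⟩
        exact ihF.2 q' (by rw [show SetOpt Tr τ Qa α Q' from hQ']; exact ⟨q, hq, hq'⟩) hs'
  -- positive conjunct
  · intro p q Q' u e e' χ mv hupd hwin hst ih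
    simp only [MotD] at ih
    simp only [MotC, SatC]
    cases mv with
    | posConjunct hQ =>
      obtain ⟨⟨p', hp', hs⟩, hneg⟩ := ih
      refine ⟨⟨p', hp', hs⟩, ?_⟩
      rintro ⟨q', hq', hs'⟩
      exact hneg q' (by rw [show SetStar Tr τ {q} Q' from hQ]; exact ⟨q, rfl, hq'⟩) hs'
    | negConjunct hP hne => exact absurd rfl hne
  -- negative conjunct
  · intro p q P' u e e' χ mv hupd hwin hst ih
    simp only [MotD] at ih
    simp only [MotC, SatC]
    obtain ⟨⟨q', hq', hs⟩, hneg⟩ := ih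
    cases mv with
    | posConjunct hQ =>
      refine ⟨?_, fun hn => hn ⟨q', hq', hs⟩⟩
      rintro ⟨p', hp', hs'⟩
      exact hneg p' (by rw [show SetStar Tr τ {p} P' from hQ]; exact ⟨p, rfl, hp'⟩) hs'
    | negConjunct hP hne =>
      refine ⟨?_, fun hn => hn ⟨q', hq', hs⟩⟩
      rintro ⟨p', hp', hs'⟩
      exact hneg p' (by rw [show SetStar Tr τ {p} P' from hP]; exact ⟨p, rfl, hp'⟩) hs'

end KeyLemma

/-- if `χ` is a strategy formula at `[p,Q]^ε_a` and `Q` is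
closed under silent steps, then `⟨ε⟩χ` distinguishes `p` from `Q`. -/
theorem strategy_formula_distinguishes_delayed {Proc Act : Type}
    (Tr : Proc → Act → Proc → Prop) (τ : Act) (p : Proc) (Q : Set Proc) (e : Energy)
    (χ : DFormula Act τ) (h : StratD Tr τ (.attD p Q) e χ)
    (hcl : SetStar Tr τ Q Q) :
    Distinguishes Tr τ (Formula.delayed χ) p Q := by
  have ih := keyD h
  simp only [MotD] at ih
  obtain ⟨⟨p', hp', hs⟩, hneg⟩ := ih
  constructor
  · exact ⟨p', hp', hs⟩
  · rintro q hq ⟨q', hq', hs'⟩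
    exact hneg q' (by rw [show SetStar Tr τ Q Q from hcl]; exact ⟨q, hq, hq'⟩) hs'

end Spectroscopy
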